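/- arXiv:1603.06905 — 9 statements merged into one kernel-verified Lean document; each statement's English description precedes it below -/
import Mathlib

section
/- If a continuous function g from [0,1] to itself satisfies g^p(x) = x for all x in [0,1] for some natural number p ≥ 1, then g^2(x) = x for all x. In particular, if p is odd, then g(x) = x for all x. -/
/-!
Since `g^[p]` is the identity on `[0,1]`, `g` is injective there, hence strictly monotone or
strictly antitone, and in either case `g^[2]` is strictly increasing. A strictly increasing
self-map has no periodic points other than fixed points: if `x < f x` then the orbit of `x`
increases and never returns. Every point of `[0,1]` is a periodic point of `g^[2]`, so
`g^[2] = id` there, and for `p = 2k + 1` this gives `x = g^[p] x = g^[2k] (g x) = g x`.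
-/

open Set Function

section LinearOrder

variable {α : Type*} [LinearOrder α] {f : α → α} {s : Set α}

theorem StrictMonoOn.lt_iterate_succ_of_lt_map (hf : StrictMonoOn f s) (hs : MapsTo f s s)
    {x : α} (hx : x ∈ s) (hlt : x < f x) (n : ℕ) : x < f^[n + 1] x := by
  induction n with
  | zero => simpa using hlt
  | succ n ih =>
    rw [iterate_succ_apply']
    exact hlt.trans (hf hx (hs.iterate (n + 1) hx) ih)

theorem StrictMonoOn.isFixedPt_of_isPeriodicPt (hf : StrictMonoOn f s) (hs : MapsTo f s s)
    {n : ℕ} (hn : n ≠ 0) {x : α} (hx : x ∈ s) (hper : IsPeriodicPt f n x) :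
    IsFixedPt f x := by
  obtain ⟨m, rfl⟩ := Nat.exists_eq_succ_of_ne_zero hn
  rcases lt_trichotomy (f x) x with hlt | heq | hgt
  · exact absurd hper (hf.dual.lt_iterate_succ_of_lt_map hs hx hlt m).ne'
  · exact heq
  · exact absurd hper (hf.lt_iterate_succ_of_lt_map hs hx hgt m).ne'

end LinearOrder

theorem Set.injOn_of_forall_iterate_eq_self {α : Type*} {f : α → α} {s : Set α} {n : ℕ}
    (hn : n ≠ 0) (h : ∀ x ∈ s, f^[n] x = x) : InjOn f s := by
  obtain ⟨m, rfl⟩ := Nat.exists_eq_succ_of_ne_zero hn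
  exact LeftInvOn.injOn (f₁' := f^[m]) fun x hx => h x hx

theorem ContinuousOn.strictMonoOn_iterate_two_of_injOn_Icc {α : Type*}
    [ConditionallyCompleteLinearOrder α] [TopologicalSpace α] [OrderTopology α]
    [DenselyOrdered α]
    {a b : α} (hab : a ≤ b) {f : α → α} (hf : ContinuousOn f (Icc a b))
    (hinj : InjOn f (Icc a b)) (hs : MapsTo f (Icc a b) (Icc a b)) :
    StrictMonoOn f^[2] (Icc a b) := by
  rcases hf.strictMonoOn_of_injOn_Icc' hab hinj with hmono | hanti
  · exact hmono.comp hmono hs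
  · exact hanti.comp hanti hs

theorem stmt_0 (g : ℝ → ℝ) (hg : ContinuousOn g (Set.Icc 0 1))
    (hmaps : Set.MapsTo g (Set.Icc 0 1) (Set.Icc 0 1))
    (p : ℕ) (hp : 1 ≤ p) (hiter : ∀ x ∈ Set.Icc (0:ℝ) 1, g^[p] x = x) :
    (∀ x ∈ Set.Icc (0:ℝ) 1, g^[2] x = x) ∧
      (Odd p → ∀ x ∈ Set.Icc (0:ℝ) 1, g x = x) := by
  have hp0 : p ≠ 0 := Nat.one_le_iff_ne_zero.mp hp
  have hinj : InjOn g (Icc (0:ℝ) 1) := injOn_of_forall_iterate_eq_self hp0 hiter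
  have hmono : StrictMonoOn g^[2] (Icc (0:ℝ) 1) :=
    hg.strictMonoOn_iterate_two_of_injOn_Icc zero_le_one hinj hmaps
  have hinvol : ∀ x ∈ Icc (0:ℝ) 1, g^[2] x = x := fun x hx =>
    hmono.isFixedPt_of_isPeriodicPt (hmaps.iterate 2) hp0 hx (IsPeriodicPt.iterate (hiter x hx) 2)
  refine ⟨hinvol, ?_⟩
  rintro ⟨k, rfl⟩ x hx
  have hgx : IsPeriodicPt g (2 * k) (g x) :=
    IsPeriodicPt.mul_const (hinvol (g x) (hmaps hx)) k
  calc g x = g^[2 * k] (g x) := hgx.symm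
    _ = x := hiter x hx
end

section
/- If a continuous map f of the interval [0,1] into itself satisfies f^n = f for some n ≥ 2, then f^3 = f. -/
/-!
On `A = f '' [0,1]`, a closed interval, `f^[n-1]` is the identity, so `f` is continuous and
injective on `A`, hence strictly monotone or strictly antitone there. Either way `f ∘ f` is strictly
increasing on `A`, and a periodic point of a strictly increasing map is fixed. So `f ∘ f` is the
identity on `A`, which is `f^[3] = f` on `[0,1]`.
-/

open Set Function

theorem StrictMonoOn.isFixedPt_of_isPeriodicPt_s1 {α : Type*} [LinearOrder α] {s : Set α}
    {g : α → α} (hg : StrictMonoOn g s) (hmaps : MapsTo g s s) {m : ℕ} (hm : 0 < m) {x : α}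
    (hx : x ∈ s) (hper : IsPeriodicPt g m x) : IsFixedPt g x := by
  have hmono : StrictMono (hmaps.restrict g s s) :=
    fun _ _ h => hg (Subtype.prop _) (Subtype.prop _) h
  have hfix := (Commute.id_right.iterate_pos_eq_iff_map_eq hmono.monotone strictMono_id hm
    (x := ⟨x, hx⟩)).1 (by ext; simpa [MapsTo.iterate_restrict] using hper.eq)
  exact congrArg Subtype.val hfix

theorem ContinuousOn.isPeriodicPt_two_of_forall_isPeriodicPt {α : Type*}
    [ConditionallyCompleteLinearOrder α] [TopologicalSpace α] [OrderTopology α]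
    [DenselyOrdered α] {a b : α} {f : α → α} (hf : ContinuousOn f (Icc a b))
    (hmaps : MapsTo f (Icc a b) (Icc a b)) {m : ℕ} (hm : 0 < m)
    (hper : ∀ x ∈ Icc a b, IsPeriodicPt f m x) : ∀ x ∈ Icc a b, IsPeriodicPt f 2 x := by
  intro x hx
  have hinj : InjOn f (Icc a b) := LeftInvOn.injOn (f₁' := f^[m - 1]) fun y hy => by
    rw [← iterate_succ_apply, Nat.succ_eq_add_one, Nat.sub_add_cancel hm]
    exact (hper y hy).eq
  have hmono : StrictMonoOn f^[2] (Icc a b) := by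
    rcases hf.strictMonoOn_of_injOn_Icc' (hx.1.trans hx.2) hinj with h | h <;>
      exact h.comp h hmaps
  exact hmono.isFixedPt_of_isPeriodicPt_s1 (hmaps.iterate 2) hm hx ((hper x hx).iterate 2)

theorem stmt_1 (f : ℝ → ℝ) (hf : ContinuousOn f (Set.Icc 0 1))
    (hmaps : Set.MapsTo f (Set.Icc 0 1) (Set.Icc 0 1))
    (n : ℕ) (hn : 2 ≤ n) (hiter : ∀ x ∈ Set.Icc (0:ℝ) 1, f^[n] x = f x) :
    ∀ x ∈ Set.Icc (0:ℝ) 1, f^[3] x = f x := by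
  intro x hx
  set A := f '' Icc 0 1
  have hA : A = Icc (sInf A) (sSup A) := hf.image_Icc zero_le_one
  have hper : ∀ y ∈ A, IsPeriodicPt f (n - 1) y := by
    rintro _ ⟨z, hz, rfl⟩
    show f^[n - 1] (f z) = f z
    rw [← iterate_succ_apply, Nat.succ_eq_add_one, Nat.sub_add_cancel (by omega)]
    exact hiter z hz
  have hmapsA : MapsTo f A A := fun y hy => mem_image_of_mem f (hmaps.image_subset hy)
  have hcA : ContinuousOn f A := hf.mono hmaps.image_subset
  rw [hA] at hper hmapsA hcA
  exact hcA.isPeriodicPt_two_of_forall_isPeriodicPt hmapsA (by omega) hper (f x)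
    (hA ▸ mem_image_of_mem f hx)
end

section
/- Let f : [0,1] → [0,1] be continuous. Then f^2 = f (f is idempotent under composition) if and only if there exist reals a, b with 0 ≤ a ≤ b ≤ 1 such that f(x) = x for all x in [a,b], f maps [0,a] into [a,b], and f maps [b,1] into [a,b]. -/
/-!
An idempotent map fixes every point of its image. For a continuous self-map of `[0, 1]` the
image is a compact interval `[a, b]`, so `f` is the identity on `[a, b]` and sends all of
`[0, 1]`, in particular `[0, a]` and `[b, 1]`, into `[a, b]`. Conversely, under the three
conditions `f` sends `[0, 1]` into its fixed interval `[a, b]`, hence `f ∘ f = f`.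
-/

open Set

section LinearOrder

variable {α : Type*} [LinearOrder α] {f : α → α} {a b c d : α}

theorem mapsTo_Icc_of_fixes_Icc (hfix : ∀ x ∈ Icc a b, f x = x)
    (hleft : MapsTo f (Icc c a) (Icc a b)) (hright : MapsTo f (Icc b d) (Icc a b)) :
    MapsTo f (Icc c d) (Icc a b) := by
  intro x ⟨hcx, hxd⟩
  rcases le_or_gt x a with hxa | hax
  · exact hleft ⟨hcx, hxa⟩
  rcases le_or_gt x b with hxb | hbx
  · rw [hfix x ⟨hax.le, hxb⟩]
    exact ⟨hax.le, hxb⟩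
  · exact hright ⟨hbx.le, hxd⟩

end LinearOrder

theorem eq_self_of_mem_image_of_idempotentOn {α : Type*} {f : α → α} {s : Set α}
    (hidem : ∀ x ∈ s, f (f x) = f x) : ∀ y ∈ f '' s, f y = y := by
  rintro _ ⟨x, hx, rfl⟩
  exact hidem x hx

section ConditionallyCompleteLinearOrder

variable {α : Type*} [ConditionallyCompleteLinearOrder α] [TopologicalSpace α] [OrderTopology α]
  [DenselyOrdered α] {f : α → α} {c d : α}

theorem ContinuousOn.exists_image_Icc_eq_Icc_of_mapsTo (hcd : c ≤ d)
    (hf : ContinuousOn f (Icc c d)) (hmaps : MapsTo f (Icc c d) (Icc c d)) :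
    ∃ a b, c ≤ a ∧ a ≤ b ∧ b ≤ d ∧ f '' Icc c d = Icc a b := by
  have himage := hf.image_Icc hcd
  have hab : sInf (f '' Icc c d) ≤ sSup (f '' Icc c d) :=
    hf.sInf_image_Icc_le (left_mem_Icc.2 hcd) |>.trans (hf.le_sSup_image_Icc (left_mem_Icc.2 hcd))
  have hsub : Icc (sInf (f '' Icc c d)) (sSup (f '' Icc c d)) ⊆ Icc c d :=
    himage ▸ hmaps.image_subset
  obtain ⟨hca, hbd⟩ := (Icc_subset_Icc_iff hab).1 hsub
  exact ⟨_, _, hca, hab, hbd, himage⟩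

theorem idempotentOn_Icc_iff (hcd : c ≤ d) (hf : ContinuousOn f (Icc c d))
    (hmaps : MapsTo f (Icc c d) (Icc c d)) :
    (∀ x ∈ Icc c d, f (f x) = f x) ↔
      ∃ a b, c ≤ a ∧ a ≤ b ∧ b ≤ d ∧ (∀ x ∈ Icc a b, f x = x) ∧
        MapsTo f (Icc c a) (Icc a b) ∧ MapsTo f (Icc b d) (Icc a b) := by
  constructor
  · intro hidem
    obtain ⟨a, b, hca, hab, hbd, himage⟩ := hf.exists_image_Icc_eq_Icc_of_mapsTo hcd hmaps
    have hfix := eq_self_of_mem_image_of_idempotentOn hidem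
    rw [himage] at hfix
    refine ⟨a, b, hca, hab, hbd, hfix, ?_, ?_⟩ <;> rw [← himage]
    · exact (mapsTo_image f (Icc c d)).mono_left (Icc_subset_Icc_right (hab.trans hbd))
    · exact (mapsTo_image f (Icc c d)).mono_left (Icc_subset_Icc_left (hca.trans hab))
  · rintro ⟨a, b, -, -, -, hfix, hleft, hright⟩ x hx
    exact hfix _ (mapsTo_Icc_of_fixes_Icc hfix hleft hright hx)

end ConditionallyCompleteLinearOrder

theorem stmt_2 (f : ℝ → ℝ) (hf : ContinuousOn f (Set.Icc 0 1))
    (hmaps : Set.MapsTo f (Set.Icc 0 1) (Set.Icc 0 1)) :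
    (∀ x ∈ Set.Icc (0:ℝ) 1, f (f x) = f x) ↔
      ∃ a b : ℝ, 0 ≤ a ∧ a ≤ b ∧ b ≤ 1 ∧
        (∀ x ∈ Set.Icc a b, f x = x) ∧
        Set.MapsTo f (Set.Icc 0 a) (Set.Icc a b) ∧
        Set.MapsTo f (Set.Icc b 1) (Set.Icc a b) :=
  idempotentOn_Icc_iff zero_le_one hf hmaps
end

section
/- If cardinalities of orbits of a continuous map f : [0,1] → [0,1] are uniformly bounded, then the set of fixed points of f^2 is a nonempty closed interval. -/
/-!
Write `g = f^[2]`. A fixed point of `f` is one of `g`, and `Fix g` is closed, so it suffices to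
show that `Fix g` is order-connected. Let `a ≤ y ≤ b` with `a`, `b` fixed and, say, `y < g y`.
If `c` is the largest fixed point in `[a, y]`, the IVT gives `w < g w` on `(c, y]`. By continuity,
points `x` just right of `c` keep their first `N` iterates below `y`, so these iterates increase
strictly: an orbit with `N + 1` points. The case `g y < y` is the same in the reversed order.
-/

open Set Function Filter Topology

section

variable {α : Type*} {g : α → α} {s : Set α}

def OrbitsBoundedBy (g : α → α) (s : Set α) (N : ℕ) : Prop :=
  ∀ x ∈ s, ∀ t : Finset α, ↑t ⊆ range (fun k : ℕ => g^[k] x) → t.card ≤ N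

theorem OrbitsBoundedBy.iterate {N : ℕ} (h : OrbitsBoundedBy g s N) (m : ℕ) :
    OrbitsBoundedBy g^[m] s N := by
  intro x hx t ht
  refine h x hx t (ht.trans ?_)
  rintro _ ⟨k, rfl⟩
  exact ⟨m * k, by simp only [iterate_mul]⟩

theorem OrbitsBoundedBy.not_injective_orbit {N : ℕ} (h : OrbitsBoundedBy g s N) {x : α}
    (hx : x ∈ s) : ¬Injective fun k : Fin (N + 1) => g^[k] x := fun hinj => by
  classical
  have := h x hx (Finset.univ.image fun k : Fin (N + 1) => g^[k] x) (by
    intro v hv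
    obtain ⟨k, -, rfl⟩ := Finset.mem_image.1 hv
    exact ⟨k, rfl⟩)
  rw [Finset.card_image_of_injective _ hinj, Finset.card_univ, Fintype.card_fin] at this
  omega

theorem ContinuousOn.isClosed_inter_fixedPoints [TopologicalSpace α] [T2Space α]
    (hg : ContinuousOn g s) (hs : IsClosed s) : IsClosed (s ∩ fixedPoints g) :=
  (hg.prodMk continuousOn_id).preimage_isClosed_of_isClosed hs isClosed_diagonal

variable [ConditionallyCompleteLinearOrder α] [TopologicalSpace α] [OrderTopology α]
  [DenselyOrdered α]

theorem exists_isFixedPt_of_mapsTo_Icc {a b : α} (hab : a ≤ b) (hg : ContinuousOn g (Icc a b))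
    (hmaps : MapsTo g (Icc a b) (Icc a b)) : ∃ x ∈ Icc a b, IsFixedPt g x :=
  let ⟨x, hx, hgx⟩ := isPreconnected_Icc.intermediate_value₂ (left_mem_Icc.2 hab)
    (right_mem_Icc.2 hab) continuousOn_id hg (hmaps (left_mem_Icc.2 hab)).1
    (hmaps (right_mem_Icc.2 hab)).2
  ⟨x, hx, hgx.symm⟩

theorem exists_isFixedPt_forall_lt_apply {a y : α} (hg : ContinuousOn g (Icc a y))
    (hay : a ≤ y) (hga : IsFixedPt g a) (hgy : y < g y) :
    ∃ c ∈ Ico a y, IsFixedPt g c ∧ ∀ w ∈ Ioc c y, w < g w := by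
  set T := Icc a y ∩ fixedPoints g
  have hT : IsClosed T := hg.isClosed_inter_fixedPoints isClosed_Icc
  have hTne : T.Nonempty := ⟨a, ⟨le_rfl, hay⟩, hga⟩
  have hTbdd : BddAbove T := ⟨y, fun x hx => hx.1.2⟩
  obtain ⟨⟨hac, hcy⟩, hgc⟩ : sSup T ∈ T := hT.csSup_mem hTne hTbdd
  have hcy' : sSup T < y := hcy.lt_of_ne fun h => hgy.ne' (h ▸ hgc)
  refine ⟨sSup T, ⟨hac, hcy'⟩, hgc, fun w hw => lt_of_not_ge fun hgw => ?_⟩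
  -- the IVT on `[w, y]` gives a fixed point `z ≥ w > sSup T`
  obtain ⟨z, hz, hgz⟩ := isPreconnected_Icc.intermediate_value₂ (left_mem_Icc.2 hw.2)
    (right_mem_Icc.2 hw.2) (hg.mono (Icc_subset_Icc (hac.trans hw.1.le) le_rfl))
    continuousOn_id hgw hgy.le
  exact (hw.1.trans_le hz.1).not_ge
    (le_csSup hTbdd ⟨⟨hac.trans (hw.1.le.trans hz.1), hz.2⟩, hgz⟩)

theorem exists_strictMono_orbit_of_forall_lt_apply (hg : ContinuousOn g s)
    (hgs : MapsTo g s s) {c y : α} (hcy : c < y) (hs : Icc c y ⊆ s) (hgc : IsFixedPt g c)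
    (hlt : ∀ w ∈ Ioc c y, w < g w) (n : ℕ) :
    ∃ x ∈ s, StrictMono fun k : Fin (n + 1) => g^[k] x := by
  have hle : 𝓝[>] c ≤ 𝓝[s] c := by
    rw [← nhdsWithin_Ioo_eq_nhdsGT hcy]
    exact nhdsWithin_mono _ (Ioo_subset_Icc_self.trans hs)
  have hstay : ∀ᶠ x in 𝓝[>] c, ∀ k : Fin (n + 1), g^[k] x < y := by
    refine eventually_all.2 fun k => hle ?_
    have hk := ((hg.iterate hgs k).continuousWithinAt (hs (left_mem_Icc.2 hcy.le))).tendsto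
    rw [(hgc.iterate k).eq] at hk
    exact hk.eventually_lt_const hcy
  have : (𝓝[>] c).NeBot := nhdsGT_neBot_of_exists_gt ⟨y, hcy⟩
  obtain ⟨x, hxy, hxc⟩ := (hstay.and self_mem_nhdsWithin).exists
  have hcx : ∀ k ≤ n, c < g^[k] x := by
    intro k hk
    induction k with
    | zero => exact hxc
    | succ k ih =>
      have hk' := ih (by omega)
      rw [iterate_succ_apply']
      exact hk'.trans (hlt _ ⟨hk', (hxy ⟨k, by omega⟩).le⟩)
  have hmem : ∀ k : Fin (n + 1), g^[k] x ∈ Ioc c y := fun k =>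
    ⟨hcx k (Nat.lt_succ_iff.1 k.2), (hxy k).le⟩
  refine ⟨x, hs (Ioc_subset_Icc_self (hmem 0)), Fin.strictMono_iff_lt_succ.2 fun k => ?_⟩
  simp only [Fin.val_succ, iterate_succ_apply']
  exact hlt _ (hmem k.castSucc)

theorem exists_strictMono_orbit_of_isFixedPt_le (hg : ContinuousOn g s)
    (hgs : MapsTo g s s) (hs : s.OrdConnected) {a y : α} (ha : a ∈ s) (hy : y ∈ s)
    (hay : a ≤ y) (hga : IsFixedPt g a) (hgy : y < g y) (n : ℕ) :
    ∃ x ∈ s, StrictMono fun k : Fin (n + 1) => g^[k] x := by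
  obtain ⟨c, hc, hgc, hlt⟩ :=
    exists_isFixedPt_forall_lt_apply (hg.mono (hs.out ha hy)) hay hga hgy
  exact exists_strictMono_orbit_of_forall_lt_apply hg hgs hc.2
    ((Icc_subset_Icc hc.1 le_rfl).trans (hs.out ha hy)) hgc hlt n

theorem exists_injective_orbit_of_not_isFixedPt (hg : ContinuousOn g s)
    (hgs : MapsTo g s s) (hs : s.OrdConnected) {a b y : α} (ha : a ∈ s) (hb : b ∈ s)
    (hay : a ≤ y) (hyb : y ≤ b) (hga : IsFixedPt g a) (hgb : IsFixedPt g b)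
    (hgy : ¬IsFixedPt g y) (n : ℕ) :
    ∃ x ∈ s, Injective fun k : Fin (n + 1) => g^[k] x := by
  have hy : y ∈ s := hs.out ha hb ⟨hay, hyb⟩
  rcases lt_or_gt_of_ne hgy with hlt | hgt
  · obtain ⟨x, hx, hmono⟩ :=
      exists_strictMono_orbit_of_isFixedPt_le (α := αᵒᵈ) hg hgs hs.dual hb hy hyb hgb hlt n
    exact ⟨x, hx, hmono.injective⟩
  · obtain ⟨x, hx, hmono⟩ :=
      exists_strictMono_orbit_of_isFixedPt_le hg hgs hs ha hy hay hga hgt n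
    exact ⟨x, hx, hmono.injective⟩

theorem OrbitsBoundedBy.ordConnected_inter_fixedPoints {N : ℕ}
    (hN : OrbitsBoundedBy g s N) (hg : ContinuousOn g s) (hgs : MapsTo g s s)
    (hs : s.OrdConnected) : (s ∩ fixedPoints g).OrdConnected := by
  refine ⟨fun a ha b hb y hy => ⟨hs.out ha.1 hb.1 hy, by_contra fun hgy => ?_⟩⟩
  obtain ⟨x, hx, hinj⟩ :=
    exists_injective_orbit_of_not_isFixedPt hg hgs hs ha.1 hb.1 hy.1 hy.2 ha.2 hb.2 hgy N
  exact hN.not_injective_orbit hx hinj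

end

theorem stmt_4 (f : ℝ → ℝ) (hf : ContinuousOn f (Set.Icc 0 1))
    (hmaps : Set.MapsTo f (Set.Icc 0 1) (Set.Icc 0 1))
    (N : ℕ)
    (hbound : ∀ x ∈ Set.Icc (0:ℝ) 1, ∀ t : Finset ℝ,
      ↑t ⊆ Set.range (fun k : ℕ => f^[k] x) → t.card ≤ N) :
    ∃ a b : ℝ, a ≤ b ∧
      {x | x ∈ Set.Icc (0:ℝ) 1 ∧ f (f x) = x} = Set.Icc a b := by
  set S := Icc (0 : ℝ) 1 ∩ fixedPoints f^[2]
  have hS : {x | x ∈ Icc (0 : ℝ) 1 ∧ f (f x) = x} = S := rfl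
  have hne : S.Nonempty :=
    let ⟨x, hx, hfx⟩ := exists_isFixedPt_of_mapsTo_Icc zero_le_one hf hmaps
    ⟨x, hx, hfx.iterate 2⟩
  have hcl : IsClosed S := (hf.iterate hmaps 2).isClosed_inter_fixedPoints isClosed_Icc
  have hconn : S.OrdConnected := (OrbitsBoundedBy.iterate hbound 2).ordConnected_inter_fixedPoints
    (hf.iterate hmaps 2) (hmaps.iterate 2) ordConnected_Icc
  have hcpt : IsCompact S := isCompact_Icc.of_isClosed_subset hcl inter_subset_left
  rw [hS, eq_Icc_of_connected_compact ⟨hne, hconn.isPreconnected⟩ hcpt]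
  exact ⟨_, _, csInf_le_csSup hne hcpt.bddBelow hcpt.bddAbove, rfl⟩
end

section
/- For every v ∈ (0,1), there exists a unique homeomorphism h : [0,1] → [0,1] satisfying h(f(x)) = f_v(h(x)) for all x ∈ [0,1], where f is the symmetric tent map and f_v the asymmetric tent map with peak at v. Moreover this h is increasing. -/
noncomputable def tent (x : ℝ) : ℝ := if x ≤ 1/2 then 2*x else 2 - 2*x

noncomputable def tentV (v x : ℝ) : ℝ := if x ≤ v then x / v else (1 - x) / (1 - v)

/-!
An increasing conjugacy `g` from `tentV u` to `tentV w` fixes `0` and `1` and sends the peak `u`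
to `w`, so on each lap it satisfies `g x = w * g (tentV u x)` or
`g x = 1 - (1 - w) * g (tentV u x)`. This functional equation is the fixed-point equation of an
operator on the continuous monotone maps of `[0, 1]` fixing `0` and `1`, and that operator
contracts the sup distance by `max w (1 - w)`; Banach's theorem gives existence and uniqueness.
Composing the solutions for `u → w` and `w → u` gives the solution for `u → u`, which is the
identity, so the solution is injective, hence a homeomorphism. Conversely a conjugating
homeomorphism cannot be decreasing: it would send `0`, which `tentV u` fixes, to `1`, which
`tentV w` does not fix.
-/

open Set unitInterval

section BijOnIcc

variable {α : Type*} [PartialOrder α] {a b : α} {g : α → α}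

theorem MonotoneOn.apply_left_of_bijOn (hab : a ≤ b) (hg : MonotoneOn g (Icc a b))
    (hb : BijOn g (Icc a b) (Icc a b)) : g a = a := by
  obtain ⟨y, hy, hgy⟩ := hb.surjOn (left_mem_Icc.2 hab)
  exact le_antisymm ((hg (left_mem_Icc.2 hab) hy hy.1).trans hgy.le)
    (hb.mapsTo (left_mem_Icc.2 hab)).1

theorem MonotoneOn.apply_right_of_bijOn (hab : a ≤ b) (hg : MonotoneOn g (Icc a b))
    (hb : BijOn g (Icc a b) (Icc a b)) : g b = b := by
  obtain ⟨y, hy, hgy⟩ := hb.surjOn (right_mem_Icc.2 hab)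
  exact le_antisymm (hb.mapsTo (right_mem_Icc.2 hab)).2
    (hgy.ge.trans (hg hy (right_mem_Icc.2 hab) hy.2))

theorem AntitoneOn.apply_left_of_bijOn (hab : a ≤ b) (hg : AntitoneOn g (Icc a b))
    (hb : BijOn g (Icc a b) (Icc a b)) : g a = b := by
  obtain ⟨y, hy, hgy⟩ := hb.surjOn (right_mem_Icc.2 hab)
  exact le_antisymm (hb.mapsTo (left_mem_Icc.2 hab)).2
    (hgy.ge.trans (hg (left_mem_Icc.2 hab) hy hy.1))

end BijOnIcc

section TentV

variable {u w x z : ℝ}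

theorem tent_eq_tentV_half : tent = tentV (1 / 2) := by
  funext x
  simp only [tent, tentV]
  split_ifs <;> ring

theorem tentV_of_le (h : x ≤ u) : tentV u x = x / u := if_pos h

theorem tentV_of_ge (hu : u ∈ Ioo 0 1) (h : u ≤ x) : tentV u x = (1 - x) / (1 - u) := by
  rcases h.eq_or_lt with rfl | h
  · rw [tentV_of_le le_rfl, div_self hu.1.ne', div_self (sub_ne_zero.2 hu.2.ne')]
  · exact if_neg h.not_ge

theorem tentV_zero (hu : 0 ≤ u) : tentV u 0 = 0 := by
  simp [tentV_of_le hu]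

theorem tentV_one (hu : u < 1) : tentV u 1 = 0 := by
  simp [tentV, hu.not_ge]

theorem tentV_self (hu : u ∈ Ioo 0 1) : tentV u u = 1 := by
  rw [tentV_of_le le_rfl, div_self hu.1.ne']

theorem continuous_tentV (hu : u ∈ Ioo 0 1) : Continuous (tentV u) :=
  Continuous.if_le (by fun_prop) (by fun_prop) continuous_id continuous_const fun x hx => by
    rw [hx, div_self hu.1.ne', div_self (sub_ne_zero.2 hu.2.ne')]

theorem tentV_mem_Icc (hu : u ∈ Ioo 0 1) (hx : x ∈ Icc 0 1) : tentV u x ∈ Icc 0 1 := by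
  have hu' : 0 < 1 - u := sub_pos.2 hu.2
  rcases le_total x u with h | h
  · rw [tentV_of_le h]
    exact ⟨div_nonneg hx.1 hu.1.le, div_le_one_of_le₀ h hu.1.le⟩
  · rw [tentV_of_ge hu h]
    exact ⟨div_nonneg (sub_nonneg.2 hx.2) hu'.le, div_le_one_of_le₀ (by linarith) hu'.le⟩

theorem eq_of_tentV_eq_one (hu : u ∈ Ioo 0 1) (h : tentV u x = 1) : x = u := by
  rcases le_total x u with hx | hx
  · rwa [tentV_of_le hx, div_eq_one_iff_eq hu.1.ne'] at h
  · rw [tentV_of_ge hu hx, div_eq_one_iff_eq (sub_ne_zero.2 hu.2.ne')] at h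
    linarith

theorem tentV_mul (hw : 0 < w) (hz : z ≤ 1) : tentV w (w * z) = z := by
  rw [tentV_of_le (mul_le_of_le_one_right hw.le hz), mul_div_cancel_left₀ _ hw.ne']

theorem tentV_one_sub_mul (hw : w ∈ Ioo 0 1) (hz : z ≤ 1) :
    tentV w (1 - (1 - w) * z) = z := by
  have hw' : 0 < 1 - w := sub_pos.2 hw.2
  rw [tentV_of_ge hw (by nlinarith), sub_sub_cancel, mul_div_cancel_left₀ _ hw'.ne']

theorem mul_tentV (hw : 0 < w) (h : x ≤ w) : w * tentV w x = x := by
  rw [tentV_of_le h, mul_div_cancel₀ _ hw.ne']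

theorem one_sub_mul_tentV (hw : w ∈ Ioo 0 1) (h : w ≤ x) : 1 - (1 - w) * tentV w x = x := by
  rw [tentV_of_ge hw h, mul_div_cancel₀ _ (sub_ne_zero.2 hw.2.ne'), sub_sub_cancel]

end TentV

structure IsMonotoneTentSemiconj (u w : ℝ) (g : ℝ → ℝ) : Prop where
  continuousOn : ContinuousOn g (Icc 0 1)
  monotoneOn : MonotoneOn g (Icc 0 1)
  map_zero : g 0 = 0
  map_one : g 1 = 1
  semiconj : ∀ x ∈ Icc (0 : ℝ) 1, g (tentV u x) = tentV w (g x)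

theorem isMonotoneTentSemiconj_id (u : ℝ) : IsMonotoneTentSemiconj u u id where
  continuousOn := continuousOn_id
  monotoneOn := monotoneOn_id
  map_zero := rfl
  map_one := rfl
  semiconj _ _ := rfl

namespace IsMonotoneTentSemiconj

variable {u v w x : ℝ} {g g₁ g₂ : ℝ → ℝ}

theorem mapsTo (hg : IsMonotoneTentSemiconj u w g) : MapsTo g (Icc 0 1) (Icc 0 1) :=
  fun _ hx =>
    ⟨hg.map_zero ▸ hg.monotoneOn (left_mem_Icc.2 zero_le_one) hx hx.1,
      hg.map_one ▸ hg.monotoneOn hx (right_mem_Icc.2 zero_le_one) hx.2⟩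

theorem comp (h₁ : IsMonotoneTentSemiconj u v g₁) (h₂ : IsMonotoneTentSemiconj v w g₂) :
    IsMonotoneTentSemiconj u w (g₂ ∘ g₁) where
  continuousOn := h₂.continuousOn.comp h₁.continuousOn h₁.mapsTo
  monotoneOn := h₂.monotoneOn.comp h₁.monotoneOn h₁.mapsTo
  map_zero := by simp only [Function.comp_apply, h₁.map_zero, h₂.map_zero]
  map_one := by simp only [Function.comp_apply, h₁.map_one, h₂.map_one]
  semiconj x hx := by
    simp only [Function.comp_apply, h₁.semiconj x hx, h₂.semiconj _ (h₁.mapsTo hx)]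

theorem apply_self (hu : u ∈ Ioo 0 1) (hw : w ∈ Ioo 0 1) (hg : IsMonotoneTentSemiconj u w g) :
    g u = w :=
  eq_of_tentV_eq_one hw <| by
    rw [← hg.semiconj u (Ioo_subset_Icc_self hu), tentV_self hu, hg.map_one]

theorem apply_of_le (hu : u ∈ Ioo 0 1) (hw : w ∈ Ioo 0 1) (hg : IsMonotoneTentSemiconj u w g)
    (hx : x ∈ Icc 0 1) (h : x ≤ u) : g x = w * g (tentV u x) := by
  have hgx : g x ≤ w := hg.apply_self hu hw ▸ hg.monotoneOn hx (Ioo_subset_Icc_self hu) h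
  rw [hg.semiconj x hx, mul_tentV hw.1 hgx]

theorem apply_of_ge (hu : u ∈ Ioo 0 1) (hw : w ∈ Ioo 0 1) (hg : IsMonotoneTentSemiconj u w g)
    (hx : x ∈ Icc 0 1) (h : u ≤ x) : g x = 1 - (1 - w) * g (tentV u x) := by
  have hgx : w ≤ g x := hg.apply_self hu hw ▸ hg.monotoneOn (Ioo_subset_Icc_self hu) hx h
  rw [hg.semiconj x hx, one_sub_mul_tentV hw hgx]

end IsMonotoneTentSemiconj

def monotoneNormalized : Set C(I, ℝ) := {h | h 0 = 0 ∧ h 1 = 1 ∧ Monotone h}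

namespace monotoneNormalized

theorem apply_mem_Icc {h : C(I, ℝ)} (hh : h ∈ monotoneNormalized) (x : I) : h x ∈ Icc 0 1 :=
  ⟨hh.1 ▸ hh.2.2 nonneg', hh.2.1 ▸ hh.2.2 le_one'⟩

theorem isClosed : IsClosed monotoneNormalized := by
  have hmono : IsClosed {h : C(I, ℝ) | Monotone h} := by
    simp only [Monotone, ofPred_forall]
    exact isClosed_iInter fun x => isClosed_iInter fun y => isClosed_iInter fun _ =>
      isClosed_le (continuous_eval_const x) (continuous_eval_const y)
  exact (isClosed_eq (continuous_eval_const 0) continuous_const).inter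
    ((isClosed_eq (continuous_eval_const 1) continuous_const).inter hmono)

instance : CompleteSpace monotoneNormalized := isClosed.completeSpace_coe

instance : Nonempty monotoneNormalized :=
  ⟨⟨⟨Subtype.val, continuous_subtype_val⟩, rfl, rfl, fun _ _ h => h⟩⟩

end monotoneNormalized

/-- `y ↦ w * y` and `y ↦ 1 - (1 - w) * y` are the two inverse branches of `tentV w`, so the
fixed points in `monotoneNormalized` are the increasing semiconjugacies of `tentV u` to
`tentV w`. -/
noncomputable def tentConjOp (u w : ℝ) (h : I → ℝ) (x : I) : ℝ :=
  if (x : ℝ) ≤ u then w * IccExtend zero_le_one h (tentV u x)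
  else 1 - (1 - w) * IccExtend zero_le_one h (tentV u x)

section tentConjOp

variable {u w : ℝ}

theorem continuous_tentConjOp (hu : u ∈ Ioo 0 1) {h : C(I, ℝ)} (h1 : h 1 = 1) :
    Continuous (tentConjOp u w h) := by
  have := continuous_tentV hu
  refine Continuous.if_le (by fun_prop) (by fun_prop) continuous_subtype_val continuous_const
    fun x hx => ?_
  rw [hx, tentV_self hu, IccExtend_right]
  change w * h 1 = 1 - (1 - w) * h 1
  rw [h1]
  ring

theorem tentConjOp_mem (hu : u ∈ Ioo 0 1) (hw : w ∈ Ioo 0 1) {h : C(I, ℝ)}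
    (hh : h ∈ monotoneNormalized) :
    (⟨tentConjOp u w h, continuous_tentConjOp hu hh.2.1⟩ : C(I, ℝ)) ∈ monotoneNormalized := by
  have hH : Monotone (IccExtend zero_le_one h) := hh.2.2.IccExtend _
  have hH1 (y : ℝ) : IccExtend zero_le_one h y ≤ 1 := (monotoneNormalized.apply_mem_Icc hh _).2
  have hu' : 0 < 1 - u := sub_pos.2 hu.2
  refine ⟨?_, ?_, fun x y (hxy : (x : ℝ) ≤ y) => ?_⟩
  · simp only [ContinuousMap.coe_mk, tentConjOp, Set.Icc.coe_zero, if_pos hu.1.le,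
      tentV_zero hu.1.le, IccExtend_left]
    exact mul_eq_zero_of_right _ hh.1
  · simp only [ContinuousMap.coe_mk, tentConjOp, Set.Icc.coe_one, if_neg hu.2.not_ge,
      tentV_one hu.2, IccExtend_left]
    rw [show (⟨0, _⟩ : I) = 0 from rfl, hh.1, mul_zero, sub_zero]
  simp only [ContinuousMap.coe_mk, tentConjOp]
  split_ifs with hx hy hy
  · rw [tentV_of_le hx, tentV_of_le hy]
    exact mul_le_mul_of_nonneg_left (hH (div_le_div_of_nonneg_right hxy hu.1.le)) hw.1.le
  · nlinarith [hH1 (tentV u x), hH1 (tentV u y), hw.1, hw.2]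
  · exact absurd (hxy.trans hy) hx
  · rw [tentV_of_ge hu (not_le.1 hx).le, tentV_of_ge hu (not_le.1 hy).le]
    have := hH (div_le_div_of_nonneg_right (sub_le_sub_left hxy 1) hu'.le)
    nlinarith [hw.2]

theorem dist_tentConjOp_le (hw : w ∈ Ioo 0 1) (h₁ h₂ : C(I, ℝ)) (x : I) :
    dist (tentConjOp u w h₁ x) (tentConjOp u w h₂ x) ≤ max w (1 - w) * dist h₁ h₂ := by
  have hd := ContinuousMap.dist_apply_le_dist (f := h₁) (g := h₂)
    (projIcc 0 1 zero_le_one (tentV u x))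
  rw [Real.dist_eq] at hd ⊢
  simp only [tentConjOp]
  split_ifs
  · rw [← mul_sub, abs_mul, abs_of_pos hw.1]
    exact mul_le_mul (le_max_left _ _) hd (abs_nonneg _) (le_max_of_le_left hw.1.le)
  · rw [sub_sub_sub_cancel_left, ← mul_sub, abs_mul, abs_of_pos (sub_pos.2 hw.2), abs_sub_comm]
    exact mul_le_mul (le_max_right _ _) hd (abs_nonneg _) (le_max_of_le_left hw.1.le)

noncomputable def tentConjMap (hu : u ∈ Ioo 0 1) (hw : w ∈ Ioo 0 1) :
    monotoneNormalized → monotoneNormalized :=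
  fun h => ⟨_, tentConjOp_mem hu hw h.2⟩

theorem contractingWith_tentConjMap (hu : u ∈ Ioo 0 1) (hw : w ∈ Ioo 0 1) :
    ContractingWith ⟨max w (1 - w), le_max_of_le_left hw.1.le⟩ (tentConjMap hu hw) := by
  refine ⟨NNReal.coe_lt_coe.1 (max_lt hw.2 (sub_lt_self 1 hw.1)), ?_⟩
  refine LipschitzWith.of_dist_le_mul fun h₁ h₂ => ?_
  exact (ContinuousMap.dist_le (mul_nonneg (le_max_of_le_left hw.1.le) dist_nonneg)).2
    (dist_tentConjOp_le hw h₁ h₂)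

end tentConjOp

theorem isMonotoneTentSemiconj_of_isFixedPt {u w : ℝ} (hu : u ∈ Ioo 0 1) (hw : w ∈ Ioo 0 1)
    {h : monotoneNormalized} (hfix : Function.IsFixedPt (tentConjMap hu hw) h) :
    IsMonotoneTentSemiconj u w (IccExtend zero_le_one h.1) where
  continuousOn := h.1.continuous.Icc_extend'.continuousOn
  monotoneOn := (h.2.2.2.IccExtend _).monotoneOn _
  map_zero := (IccExtend_left _ _).trans h.2.1
  map_one := (IccExtend_right _ _).trans h.2.2.1
  semiconj x hx := by
    have hle (y : ℝ) : IccExtend zero_le_one h.1 y ≤ 1 :=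
      (monotoneNormalized.apply_mem_Icc h.2 _).2
    rw [IccExtend_of_mem _ _ hx, ← congr($hfix.1 ⟨x, hx⟩)]
    change _ = tentV w (tentConjOp u w h.1 ⟨x, hx⟩)
    simp only [tentConjOp]
    split_ifs
    · rw [tentV_mul hw.1 (hle _)]
    · rw [tentV_one_sub_mul hw (hle _)]

theorem exists_isMonotoneTentSemiconj {u w : ℝ} (hu : u ∈ Ioo 0 1) (hw : w ∈ Ioo 0 1) :
    ∃ g, IsMonotoneTentSemiconj u w g :=
  ⟨_, isMonotoneTentSemiconj_of_isFixedPt hu hw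
    (contractingWith_tentConjMap hu hw).fixedPoint_isFixedPt⟩

namespace IsMonotoneTentSemiconj

variable {u w : ℝ} {g g₁ g₂ : ℝ → ℝ}

theorem restrict_mem (hg : IsMonotoneTentSemiconj u w g) :
    (⟨(Icc 0 1).domRestrict g, hg.continuousOn.domRestrict⟩ : C(I, ℝ)) ∈ monotoneNormalized :=
  ⟨hg.map_zero, hg.map_one, fun x y hxy => hg.monotoneOn x.2 y.2 hxy⟩

theorem isFixedPt_tentConjMap (hu : u ∈ Ioo 0 1) (hw : w ∈ Ioo 0 1)
    (hg : IsMonotoneTentSemiconj u w g) :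
    Function.IsFixedPt (tentConjMap hu hw) ⟨_, hg.restrict_mem⟩ := by
  refine Subtype.ext (ContinuousMap.ext fun x => ?_)
  change tentConjOp u w ((Icc 0 1).domRestrict g) x = g x
  simp only [tentConjOp, IccExtend_of_mem _ _ (tentV_mem_Icc hu x.2)]
  split_ifs with hx
  · exact (hg.apply_of_le hu hw x.2 hx).symm
  · exact (hg.apply_of_ge hu hw x.2 (not_le.1 hx).le).symm

theorem eqOn (hu : u ∈ Ioo 0 1) (hw : w ∈ Ioo 0 1) (h₁ : IsMonotoneTentSemiconj u w g₁)
    (h₂ : IsMonotoneTentSemiconj u w g₂) : EqOn g₁ g₂ (Icc 0 1) := fun x hx =>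
  congr($((contractingWith_tentConjMap hu hw).fixedPoint_unique'
    (h₁.isFixedPt_tentConjMap hu hw) (h₂.isFixedPt_tentConjMap hu hw)).1 ⟨x, hx⟩)

theorem injOn (hu : u ∈ Ioo 0 1) (hw : w ∈ Ioo 0 1) (hg : IsMonotoneTentSemiconj u w g) :
    InjOn g (Icc 0 1) := by
  obtain ⟨k, hk⟩ := exists_isMonotoneTentSemiconj hw hu
  have hkg := (hg.comp hk).eqOn hu hu (isMonotoneTentSemiconj_id u)
  intro x hx y hy hxy
  calc x = k (g x) := (hkg hx).symm
    _ = k (g y) := by rw [hxy]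
    _ = y := hkg hy

theorem bijOn (hu : u ∈ Ioo 0 1) (hw : w ∈ Ioo 0 1) (hg : IsMonotoneTentSemiconj u w g) :
    BijOn g (Icc 0 1) (Icc 0 1) := by
  refine ⟨hg.mapsTo, hg.injOn hu hw, fun y hy => ?_⟩
  have := intermediate_value_Icc zero_le_one hg.continuousOn
  rw [hg.map_zero, hg.map_one] at this
  exact this hy

theorem of_bijOn (hu : u ∈ Ioo 0 1) (hw : w < 1) (hc : ContinuousOn g (Icc 0 1))
    (hb : BijOn g (Icc 0 1) (Icc 0 1))
    (hs : ∀ x ∈ Icc (0 : ℝ) 1, g (tentV u x) = tentV w (g x)) :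
    IsMonotoneTentSemiconj u w g := by
  rcases hc.strictMonoOn_of_injOn_Icc' zero_le_one hb.injOn with hmono | hanti
  · exact ⟨hc, hmono.monotoneOn, hmono.monotoneOn.apply_left_of_bijOn zero_le_one hb,
      hmono.monotoneOn.apply_right_of_bijOn zero_le_one hb, hs⟩
  · have h0 := hs 0 (left_mem_Icc.2 zero_le_one)
    rw [tentV_zero hu.1.le, hanti.antitoneOn.apply_left_of_bijOn zero_le_one hb, tentV_one hw]
      at h0
    exact absurd h0 one_ne_zero

end IsMonotoneTentSemiconj

theorem stmt_9 (v : ℝ) (hv : v ∈ Set.Ioo (0:ℝ) 1) :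
    ∃ h : ℝ → ℝ,
      (ContinuousOn h (Set.Icc 0 1) ∧ Set.BijOn h (Set.Icc 0 1) (Set.Icc 0 1) ∧
        (∀ x ∈ Set.Icc (0:ℝ) 1, h (tent x) = tentV v (h x)) ∧
        StrictMonoOn h (Set.Icc 0 1)) ∧
      ∀ h' : ℝ → ℝ,
        ContinuousOn h' (Set.Icc 0 1) → Set.BijOn h' (Set.Icc 0 1) (Set.Icc 0 1) →
        (∀ x ∈ Set.Icc (0:ℝ) 1, h' (tent x) = tentV v (h' x)) →
        Set.EqOn h h' (Set.Icc 0 1) := by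
  have hhalf : (1 / 2 : ℝ) ∈ Ioo 0 1 := by norm_num
  rw [tent_eq_tentV_half]
  obtain ⟨h, hh⟩ := exists_isMonotoneTentSemiconj hhalf hv
  refine ⟨h, ⟨hh.continuousOn, hh.bijOn hhalf hv, hh.semiconj,
    hh.monotoneOn.strictMonoOn_of_injOn (hh.injOn hhalf hv)⟩, fun h' hc hb hs => ?_⟩
  exact hh.eqOn hhalf hv (.of_bijOn hhalf hv.2 hc hb hs)
end

section
/- Let B_n be the set of solutions of f_v^n(x) = 0 in [0,1], where f_v is the asymmetric tent map with peak v ∈ (0,1). Then the set B = ⋃_{n≥1} B_n is dense in [0,1]. Moreover, if d_n denotes the maximal gap between consecutive points of B_n, then d_{n+1} ≤ max(v, 1-v) · d_n. -/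
def tentB (v : ℝ) (n : ℕ) : Set ℝ :=
  {x | x ∈ Set.Icc (0:ℝ) 1 ∧ (tentV v)^[n] x = 0}

noncomputable def maxGap (v : ℝ) (n : ℕ) : ℝ :=
  sSup {d : ℝ | ∃ x ∈ tentB v n, ∃ y ∈ tentB v n,
    x < y ∧ (∀ z ∈ tentB v n, z ∉ Set.Ioo x y) ∧ d = y - x}

/-!
On `[0, v]` and on `[v, 1]` the tent map is an affine bijection onto `[0, 1]`, with inverse branches
`t ↦ v t` and `t ↦ 1 - (1 - v) t`; hence `B (n+1)` is the union of the images of `B n` under these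
two contractions. Iterating the contraction on the side of `x` gives points of `B (n+1)` within
`max v (1 - v) ^ n` of any `x ∈ [0, 1]`. For `n ≥ 1` the peak `v` lies in `B (n+1)`, so two
consecutive points of `B (n+1)` lie on the same side of `v`, and the inverse branch there carries
them back to consecutive points of `B n`, shrinking their distance by the factor `v` or `1 - v`.
-/

open Set

def IsGap (S : Set ℝ) (x y : ℝ) : Prop :=
  x ∈ S ∧ y ∈ S ∧ x < y ∧ ∀ z ∈ S, z ∉ Ioo x y

theorem isGap_of_strictMonoOn {S S' I : Set ℝ} [I.OrdConnected] {g : ℝ → ℝ}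
    (hg : StrictMonoOn g I) (hS : ∀ t ∈ I, g t ∈ S' ↔ t ∈ S) {a b : ℝ} (ha : a ∈ I) (hb : b ∈ I)
    (h : IsGap S' (g a) (g b)) : IsGap S a b := by
  obtain ⟨hga, hgb, hlt, hgap⟩ := h
  refine ⟨(hS a ha).1 hga, (hS b hb).1 hgb, (hg.lt_iff_lt ha hb).1 hlt, fun z hz hzab => ?_⟩
  have hzI : z ∈ I := ‹I.OrdConnected›.out ha hb (Ioo_subset_Icc_self hzab)
  exact hgap (g z) ((hS z hzI).2 hz)
    ⟨hg ha hzI hzab.1, hg hzI hb hzab.2⟩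

theorem isGap_of_strictAntiOn {S S' I : Set ℝ} [I.OrdConnected] {g : ℝ → ℝ}
    (hg : StrictAntiOn g I) (hS : ∀ t ∈ I, g t ∈ S' ↔ t ∈ S) {a b : ℝ} (ha : a ∈ I) (hb : b ∈ I)
    (h : IsGap S' (g b) (g a)) : IsGap S a b := by
  obtain ⟨hgb, hga, hlt, hgap⟩ := h
  refine ⟨(hS a ha).1 hga, (hS b hb).1 hgb, (hg.lt_iff_gt hb ha).1 hlt, fun z hz hzab => ?_⟩
  have hzI : z ∈ I := ‹I.OrdConnected›.out ha hb (Ioo_subset_Icc_self hzab)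
  exact hgap (g z) ((hS z hzI).2 hz)
    ⟨hg hzI hb hzab.2, hg ha hzI hzab.1⟩

namespace tentV

variable {v : ℝ}

theorem apply_mul (hv : 0 < v) {t : ℝ} (ht : t ≤ 1) : tentV v (v * t) = t := by
  rw [tentV, if_pos (mul_le_of_le_one_right hv.le ht), mul_div_cancel_left₀ t hv.ne']

theorem apply_one_sub_mul (hv : v ∈ Ioo 0 1) {t : ℝ} (ht : t ≤ 1) :
    tentV v (1 - (1 - v) * t) = t := by
  obtain ⟨hv0, hv1⟩ := hv
  have h1v : 1 - v ≠ 0 := (sub_pos.2 hv1).ne'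
  unfold tentV
  split_ifs with h
  · obtain rfl : t = 1 := by nlinarith
    rw [mul_one, sub_sub_cancel, div_self hv0.ne']
  · field_simp
    ring

end tentV

namespace tentB

variable {v : ℝ}

theorem subset_Icc (n : ℕ) : tentB v n ⊆ Icc 0 1 := fun _ hx => hx.1

theorem mul_mem_succ_iff (hv : v ∈ Ioo 0 1) {n : ℕ} {t : ℝ} (ht : t ∈ Icc 0 1) :
    v * t ∈ tentB v (n + 1) ↔ t ∈ tentB v n := by
  obtain ⟨hv0, hv1⟩ := hv
  have hvt : v * t ∈ Icc 0 1 :=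
    ⟨mul_nonneg hv0.le ht.1, mul_le_one₀ hv1.le ht.1 ht.2⟩
  simp only [tentB, mem_ofPred_eq, Function.iterate_succ_apply, tentV.apply_mul hv0 ht.2,
    hvt, ht, true_and]

theorem one_sub_mul_mem_succ_iff (hv : v ∈ Ioo 0 1) {n : ℕ} {t : ℝ} (ht : t ∈ Icc 0 1) :
    1 - (1 - v) * t ∈ tentB v (n + 1) ↔ t ∈ tentB v n := by
  have hvt : 1 - (1 - v) * t ∈ Icc 0 1 := by
    obtain ⟨hv0, hv1⟩ := hv
    constructor <;> nlinarith [ht.1, ht.2]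
  simp only [tentB, mem_ofPred_eq, Function.iterate_succ_apply, tentV.apply_one_sub_mul hv ht.2,
    hvt, ht, true_and]

theorem zero_mem (hv : v ∈ Ioo 0 1) (n : ℕ) : 0 ∈ tentB v n := by
  induction n with
  | zero => exact ⟨left_mem_Icc.2 zero_le_one, rfl⟩
  | succ n ih => simpa using (mul_mem_succ_iff hv (left_mem_Icc.2 zero_le_one)).2 ih

theorem one_mem (hv : v ∈ Ioo 0 1) {n : ℕ} (hn : n ≠ 0) : 1 ∈ tentB v n := by
  obtain ⟨m, rfl⟩ := Nat.exists_eq_succ_of_ne_zero hn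
  simpa using (one_sub_mul_mem_succ_iff hv (left_mem_Icc.2 zero_le_one)).2 (zero_mem hv m)

theorem peak_mem (hv : v ∈ Ioo 0 1) {n : ℕ} (hn : n ≠ 0) : v ∈ tentB v (n + 1) := by
  simpa using (mul_mem_succ_iff hv (right_mem_Icc.2 zero_le_one)).2 (one_mem hv hn)

theorem exists_mem_abs_sub_le (hv : v ∈ Ioo 0 1) (n : ℕ) {x : ℝ} (hx : x ∈ Icc 0 1) :
    ∃ y ∈ tentB v (n + 1), |x - y| ≤ max v (1 - v) ^ n := by
  induction n generalizing x with
  | zero => exact ⟨0, zero_mem hv 1, by simpa [abs_of_nonneg hx.1] using hx.2⟩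
  | succ n ih =>
    have hv0 : 0 < v := hv.1
    have h1v : 0 < 1 - v := sub_pos.2 hv.2
    rcases le_total x v with hxv | hvx
    · obtain ⟨y, hy, hxy⟩ := ih ⟨div_nonneg hx.1 hv0.le, (div_le_one hv0).2 hxv⟩
      refine ⟨v * y, (mul_mem_succ_iff hv (subset_Icc _ hy)).2 hy, ?_⟩
      calc |x - v * y| = v * |x / v - y| := by
            rw [← abs_of_pos hv0, ← abs_mul, abs_of_pos hv0, mul_sub, mul_div_cancel₀ x hv0.ne']
        _ ≤ max v (1 - v) * max v (1 - v) ^ n := by gcongr; exact le_max_left _ _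
        _ = max v (1 - v) ^ (n + 1) := (pow_succ' _ _).symm
    · obtain ⟨y, hy, hxy⟩ := ih (x := (1 - x) / (1 - v)) ⟨div_nonneg (by linarith [hx.2]) h1v.le,
        (div_le_one h1v).2 (by linarith)⟩
      refine ⟨1 - (1 - v) * y, (one_sub_mul_mem_succ_iff hv (subset_Icc _ hy)).2 hy, ?_⟩
      calc |x - (1 - (1 - v) * y)| = (1 - v) * |(1 - x) / (1 - v) - y| := by
            rw [← abs_of_pos h1v, ← abs_mul, abs_of_pos h1v, ← abs_neg, mul_sub,
              mul_div_cancel₀ _ h1v.ne']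
            ring_nf
        _ ≤ max v (1 - v) * max v (1 - v) ^ n := by gcongr; exact le_max_right _ _
        _ = max v (1 - v) ^ (n + 1) := (pow_succ' _ _).symm

end tentB

namespace maxGap

variable {v : ℝ} {n : ℕ}

theorem sub_le {x y : ℝ} (h : IsGap (tentB v n) x y) : y - x ≤ maxGap v n := by
  obtain ⟨hx, hy, hxy, hgap⟩ := h
  refine le_csSup ⟨1, ?_⟩ ⟨x, hx, y, hy, hxy, hgap, rfl⟩
  rintro d ⟨x', hx', y', hy', -, -, rfl⟩
  linarith [hx'.1.1, hy'.1.2]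

theorem nonneg : 0 ≤ maxGap v n :=
  Real.sSup_nonneg fun _ ⟨_, _, _, _, hxy, _, hd⟩ => hd ▸ sub_nonneg.2 hxy.le

theorem le_of_forall {c : ℝ} (hc : 0 ≤ c) (h : ∀ x y, IsGap (tentB v n) x y → y - x ≤ c) :
    maxGap v n ≤ c :=
  Real.sSup_le (fun _ ⟨x, hx, y, hy, hxy, hgap, hd⟩ => hd ▸ h x y ⟨hx, hy, hxy, hgap⟩) hc

end maxGap

theorem tentB.exists_isGap_of_isGap_succ {v : ℝ} (hv : v ∈ Ioo 0 1) {n : ℕ} (hn : n ≠ 0)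
    {x y : ℝ} (h : IsGap (tentB v (n + 1)) x y) :
    ∃ a b, IsGap (tentB v n) a b ∧ y - x ≤ max v (1 - v) * (b - a) := by
  have hv0 : 0 < v := hv.1
  have h1v : 0 < 1 - v := sub_pos.2 hv.2
  have hx := subset_Icc _ h.1
  have hy := subset_Icc _ h.2.1
  have hside : y ≤ v ∨ v ≤ x := by
    by_contra! hyx
    exact h.2.2.2 v (peak_mem hv hn) ⟨hyx.2, hyx.1⟩
  rcases hside with hyv | hvx
  · have hmono : StrictMonoOn (v * ·) (Icc 0 1) := fun a _ b _ hab => by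
      simpa using mul_lt_mul_of_pos_left hab hv0
    refine ⟨x / v, y / v, isGap_of_strictMonoOn hmono (fun t ht => mul_mem_succ_iff hv ht)
      ⟨div_nonneg hx.1 hv0.le, (div_le_one hv0).2 (by linarith [h.2.2.1])⟩
      ⟨div_nonneg hy.1 hv0.le, (div_le_one hv0).2 hyv⟩ ?_, ?_⟩
    · simpa only [mul_div_cancel₀ _ hv0.ne'] using h
    · calc y - x = v * (y / v - x / v) := by field_simp
        _ ≤ max v (1 - v) * (y / v - x / v) := by
          gcongr
          · exact sub_nonneg.2 (div_le_div_of_nonneg_right h.2.2.1.le hv0.le)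
          · exact le_max_left _ _
  · have hanti : StrictAntiOn (fun t => 1 - (1 - v) * t) (Icc 0 1) := fun a _ b _ hab => by
      simpa using mul_lt_mul_of_pos_left hab h1v
    refine ⟨(1 - y) / (1 - v), (1 - x) / (1 - v),
      isGap_of_strictAntiOn hanti (fun t ht => one_sub_mul_mem_succ_iff hv ht)
      ⟨div_nonneg (by linarith [hy.2]) h1v.le, (div_le_one h1v).2 (by linarith [h.2.2.1])⟩
      ⟨div_nonneg (by linarith [hx.2]) h1v.le, (div_le_one h1v).2 (by linarith)⟩ ?_, ?_⟩
    · simpa only [mul_div_cancel₀ _ h1v.ne', sub_sub_cancel] using h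
    · calc y - x = (1 - v) * ((1 - x) / (1 - v) - (1 - y) / (1 - v)) := by
            field_simp
            ring
        _ ≤ max v (1 - v) * ((1 - x) / (1 - v) - (1 - y) / (1 - v)) := by
          gcongr
          · exact sub_nonneg.2 (div_le_div_of_nonneg_right (by linarith [h.2.2.1]) h1v.le)
          · exact le_max_right _ _

theorem stmt_10 (v : ℝ) (hv : v ∈ Set.Ioo (0:ℝ) 1) :
    (Set.Icc (0:ℝ) 1 ⊆ closure (⋃ n : ℕ, tentB v (n+1))) ∧
    ∀ n : ℕ, 1 ≤ n → maxGap v (n+1) ≤ max v (1-v) * maxGap v n := by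
  have hc0 : 0 ≤ max v (1 - v) := hv.1.le.trans (le_max_left _ _)
  refine ⟨fun x hx => Metric.mem_closure_iff.2 fun ε hε => ?_, fun n hn => ?_⟩
  · obtain ⟨n, hn⟩ := exists_pow_lt_of_lt_one hε (max_lt hv.2 (sub_lt_self 1 hv.1) : max v (1 - v) < 1)
    obtain ⟨y, hy, hxy⟩ := tentB.exists_mem_abs_sub_le hv n hx
    exact ⟨y, mem_iUnion.2 ⟨n, hy⟩, (Real.dist_eq x y).trans_lt (hxy.trans_lt hn)⟩
  · refine maxGap.le_of_forall (mul_nonneg hc0 maxGap.nonneg) fun x y hxy => ?_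
    obtain ⟨a, b, hab, hle⟩ := tentB.exists_isGap_of_isGap_succ hv (by omega) hxy
    exact hle.trans (mul_le_mul_of_nonneg_left (maxGap.sub_le hab) hc0)
end

section
/- Let f be the symmetric tent map. If ξ : [0,1] → [0,1] is a continuous solution of ξ(f(x)) = f(ξ(x)) for all x, and ξ is constant on some nondegenerate interval [α, β] ⊆ [0,1], then ξ is constant on all of [0,1]. -/
/-!
If `ξ` commutes with the tent map `T` on `[0,1]` and is constant on an interval `J`, then it is
constant on `T '' J`. The image of an interval not containing `1/2` is an interval twice as long;
an interval `[a, b]` containing `1/2` covers some `[m, 1]` with `1 - m ≥ b - a`, whose image in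
turn covers `[0, min (2 - 2m) 1]`. So after finitely many steps `ξ` is constant on `[0, 1]`.
-/

open Set

theorem tent_of_le_half {x : ℝ} (h : x ≤ 1/2) : tent x = 2 * x := if_pos h

theorem tent_of_half_le {x : ℝ} (h : 1/2 ≤ x) : tent x = 2 - 2 * x := by
  unfold tent
  split_ifs <;> linarith

theorem tent_half : tent (1/2) = 1 := by norm_num [tent]

theorem tent_one : tent 1 = 0 := by norm_num [tent]

theorem tent_eq_one_sub_abs (x : ℝ) : tent x = 1 - |2 * x - 1| := by
  rcases le_total x (1/2) with h | h
  · rw [tent_of_le_half h, abs_of_nonpos (by linarith)]; ring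
  · rw [tent_of_half_le h, abs_of_nonneg (by linarith)]; ring

theorem continuous_tent : Continuous tent := by
  rw [funext tent_eq_one_sub_abs]
  fun_prop

theorem uIcc_subset_image_tent (x y : ℝ) : uIcc (tent x) (tent y) ⊆ tent '' uIcc x y :=
  intermediate_value_uIcc continuous_tent.continuousOn

theorem Set.Subsingleton.image_image_of_eqOn_comp {α : Type*} {ξ f : α → α} {s : Set α}
    (hcomm : EqOn (ξ ∘ f) (f ∘ ξ) s) (hs : (ξ '' s).Subsingleton) :
    (ξ '' (f '' s)).Subsingleton := by
  rw [← image_comp, hcomm.image_eq, image_comp]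
  exact hs.image f

section TentCommute

variable {ξ : ℝ → ℝ} (hcomm : EqOn (ξ ∘ tent) (tent ∘ ξ) (Icc 0 1))
include hcomm

theorem subsingleton_image_uIcc_tent {a b x y : ℝ} (ha : 0 ≤ a) (hb : b ≤ 1)
    (hs : (ξ '' Icc a b).Subsingleton) (hx : x ∈ Icc a b) (hy : y ∈ Icc a b) :
    (ξ '' uIcc (tent x) (tent y)).Subsingleton :=
  (hs.image_image_of_eqOn_comp (hcomm.mono (Icc_subset_Icc ha hb))).anti <|
    image_mono <| (uIcc_subset_image_tent x y).trans <| image_mono <| uIcc_subset_Icc hx hy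

theorem subsingleton_image_Icc_one_of_half_mem {a b : ℝ} (ha : 0 ≤ a) (hb : b ≤ 1)
    (ha' : a ≤ 1/2) (hb' : 1/2 ≤ b) (hs : (ξ '' Icc a b).Subsingleton) :
    (ξ '' Icc (min (2 * a) (2 - 2 * b)) 1).Subsingleton := by
  have hhalf : 1/2 ∈ Icc a b := ⟨ha', hb'⟩
  rcases le_total (2 * a) (2 - 2 * b) with h | h
  · have := subsingleton_image_uIcc_tent hcomm ha hb hs ⟨le_rfl, by linarith⟩ hhalf
    rwa [tent_of_le_half ha', tent_half, uIcc_of_le (by linarith),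
      ← min_eq_left h] at this
  · have := subsingleton_image_uIcc_tent hcomm ha hb hs ⟨by linarith, le_rfl⟩ hhalf
    rwa [tent_of_half_le hb', tent_half, uIcc_of_le (by linarith),
      ← min_eq_right h] at this

theorem subsingleton_image_Icc_zero_of_Icc_one {m : ℝ} (hm : 0 ≤ m) (hm1 : m ≤ 1)
    (hs : (ξ '' Icc m 1).Subsingleton) :
    (ξ '' Icc 0 (2 - 2 * max m (1/2))).Subsingleton := by
  have hmax : max m (1/2) ∈ Icc m 1 := ⟨le_max_left _ _, max_le hm1 (by norm_num)⟩
  have := subsingleton_image_uIcc_tent hcomm hm le_rfl hs hmax ⟨hmax.1.trans hmax.2, le_rfl⟩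
  rwa [tent_of_half_le (le_max_right _ _), tent_one, uIcc_comm,
    uIcc_of_le (by linarith [hmax.2])] at this

theorem subsingleton_image_Icc_zero_one_of_one_le_two_pow_mul (n : ℕ) :
    ∀ {a b : ℝ}, 0 ≤ a → b ≤ 1 → 1 ≤ 2 ^ n * (b - a) → (ξ '' Icc a b).Subsingleton →
      (ξ '' Icc 0 1).Subsingleton := by
  induction n with
  | zero =>
    intro a b ha hb hlen hs
    rw [pow_zero, one_mul] at hlen
    exact hs.anti <| image_mono <| Icc_subset_Icc (by linarith) (by linarith)
  | succ n ih =>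
    intro a b ha hb hlen hs
    have hab : a ≤ b := by
      linarith [pos_of_mul_pos_right (one_pos.trans_le hlen) (by positivity)]
    rw [pow_succ] at hlen
    rcases le_or_gt b (1/2) with hb' | hb'
    · have := subsingleton_image_uIcc_tent hcomm ha hb hs ⟨le_rfl, hab⟩ ⟨hab, le_rfl⟩
      rw [tent_of_le_half (hab.trans hb'), tent_of_le_half hb', uIcc_of_le (by linarith)] at this
      exact ih (by linarith) (by linarith) (by linarith) this
    rcases le_or_gt (1/2) a with ha' | ha'
    · have := subsingleton_image_uIcc_tent hcomm ha hb hs ⟨hab, le_rfl⟩ ⟨le_rfl, hab⟩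
      rw [tent_of_half_le (ha'.trans hab), tent_of_half_le ha', uIcc_of_le (by linarith)] at this
      exact ih (by linarith) (by linarith) (by linarith) this
    set m := min (2 * a) (2 - 2 * b)
    have hm : m ≤ 1 + a - b := by
      linarith [min_le_left (2 * a) (2 - 2 * b), min_le_right (2 * a) (2 - 2 * b)]
    have := subsingleton_image_Icc_zero_of_Icc_one hcomm (le_min (by linarith) (by linarith))
      (by linarith) (subsingleton_image_Icc_one_of_half_mem hcomm ha hb ha'.le hb'.le hs)
    refine ih le_rfl (by linarith [le_max_right m (1/2)]) ?_ this
    have hpow : (1 : ℝ) ≤ 2 ^ n := one_le_pow₀ (by norm_num)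
    rcases max_cases m (1/2) with ⟨h, -⟩ | ⟨h, -⟩ <;> rw [h] <;> nlinarith

end TentCommute

theorem stmt_14_general (ξ : ℝ → ℝ)
    (hcomm : ∀ x ∈ Set.Icc (0:ℝ) 1, ξ (tent x) = tent (ξ x))
    (α β : ℝ) (hα : 0 ≤ α) (hαβ : α < β) (hβ : β ≤ 1)
    (c : ℝ) (hconst : ∀ x ∈ Set.Icc α β, ξ x = c) :
    ∃ c' : ℝ, ∀ x ∈ Set.Icc (0:ℝ) 1, ξ x = c' := by
  obtain ⟨n, hn⟩ := pow_unbounded_of_one_lt (β - α)⁻¹ (by norm_num : (1 : ℝ) < 2)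
  have hs : (ξ '' Icc α β).Subsingleton := by
    rintro _ ⟨x, hx, rfl⟩ _ ⟨y, hy, rfl⟩
    rw [hconst x hx, hconst y hy]
  have hlen : 1 ≤ 2 ^ n * (β - α) := (inv_le_iff_one_le_mul₀ (sub_pos.2 hαβ)).1 hn.le
  have hall := subsingleton_image_Icc_zero_one_of_one_le_two_pow_mul
    (fun x hx => hcomm x hx) n hα hβ hlen hs
  exact ⟨ξ 0, fun x hx => hall (mem_image_of_mem ξ hx) (mem_image_of_mem ξ ⟨le_rfl, zero_le_one⟩)⟩

theorem stmt_14 (ξ : ℝ → ℝ) (hc : ContinuousOn ξ (Set.Icc 0 1))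
    (hmaps : Set.MapsTo ξ (Set.Icc 0 1) (Set.Icc 0 1))
    (hcomm : ∀ x ∈ Set.Icc (0:ℝ) 1, ξ (tent x) = tent (ξ x))
    (α β : ℝ) (hα : 0 ≤ α) (hαβ : α < β) (hβ : β ≤ 1)
    (c : ℝ) (hconst : ∀ x ∈ Set.Icc α β, ξ x = c) :
    ∃ c' : ℝ, ∀ x ∈ Set.Icc (0:ℝ) 1, ξ x = c' :=
  stmt_14_general ξ hcomm α β hα hαβ hβ c hconst
end

section
/- For every natural number k ≥ 1, the function ξ(x) = (1 - (-1)^⌊kx⌋)/2 + (-1)^⌊kx⌋·{kx} (where {·} is the fractional part and ⌊·⌋ the floor) satisfies ξ(f(x)) = f(ξ(x)) for all x ∈ [0,1], where f is the symmetric tent map. -/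
noncomputable def zigzag (k : ℕ) (x : ℝ) : ℝ :=
  (1 - (-1:ℝ) ^ Int.floor ((k:ℝ) * x)) / 2
    + (-1:ℝ) ^ Int.floor ((k:ℝ) * x) * Int.fract ((k:ℝ) * x)

/-!
Both sides are values of the triangle wave `w` (distance to the nearest even integer), since
`zigzag k x = w (k x)` and `tent a = w (2 a)` on `[0, 1]`. As `w y ≡ ± y` modulo `2ℤ` and `w` is even
and `2`-periodic, `w (m * w y) = w (m * y)` for every integer `m`; hence both sides equal `w (2 k x)`.
-/

lemma neg_one_zpow_neg {α : Type*} [DivisionRing α] (n : ℤ) : (-1 : α) ^ (-n) = (-1 : α) ^ n := by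
  rw [zpow_neg, ← inv_zpow, inv_neg, inv_one]

noncomputable def triangleWave (y : ℝ) : ℝ :=
  (1 - (-1:ℝ) ^ ⌊y⌋) / 2 + (-1:ℝ) ^ ⌊y⌋ * Int.fract y

lemma zigzag_eq_triangleWave (k : ℕ) (x : ℝ) : zigzag k x = triangleWave (k * x) := rfl

namespace triangleWave

lemma intCast_add (n : ℤ) {t : ℝ} (h0 : 0 ≤ t) (h1 : t < 1) :
    triangleWave (n + t) = (1 - (-1:ℝ) ^ n) / 2 + (-1:ℝ) ^ n * t := by
  rw [triangleWave, Int.floor_intCast_add, Int.fract_intCast_add,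
    Int.floor_eq_zero_iff.2 ⟨h0, h1⟩, Int.fract_eq_self.2 ⟨h0, h1⟩, add_zero]

lemma intCast (n : ℤ) : triangleWave n = (1 - (-1:ℝ) ^ n) / 2 := by
  simpa using intCast_add n le_rfl zero_lt_one

lemma add_two_mul_intCast (y : ℝ) (j : ℤ) : triangleWave (y + 2 * j) = triangleWave y := by
  have hy : y + 2 * (j : ℝ) = ↑(⌊y⌋ + 2 * j) + Int.fract y := by
    push_cast; rw [Int.fract]; ring
  have hsign : (-1:ℝ) ^ (⌊y⌋ + 2 * j) = (-1:ℝ) ^ ⌊y⌋ := by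
    rw [zpow_add₀ (by norm_num), zpow_mul]; norm_num
  rw [hy, intCast_add _ (Int.fract_nonneg y) (Int.fract_lt_one y), hsign, triangleWave]

lemma neg (y : ℝ) : triangleWave (-y) = triangleWave y := by
  by_cases hfract : Int.fract y = 0
  · obtain ⟨n, rfl⟩ := Int.fract_eq_zero_iff.1 hfract
    rw [← Int.cast_neg, intCast, intCast, neg_one_zpow_neg]
  · have hpos : 0 < Int.fract y := (Int.fract_nonneg y).lt_of_ne' hfract
    have hy : -y = ↑(-⌊y⌋ - 1) + (1 - Int.fract y) := by
      push_cast; rw [Int.fract]; ring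
    have hsign : (-1:ℝ) ^ (-⌊y⌋ - 1) = -(-1:ℝ) ^ ⌊y⌋ := by
      rw [zpow_sub₀ (by norm_num), neg_one_zpow_neg, zpow_one, div_neg, div_one]
    rw [hy, intCast_add _ (by linarith [Int.fract_lt_one y]) (by linarith), hsign, triangleWave]
    ring

lemma exists_eq_add_or_eq_neg_add (y : ℝ) :
    ∃ j : ℤ, triangleWave y = y + 2 * j ∨ triangleWave y = -y + 2 * j := by
  rw [triangleWave, Int.fract]
  rcases Int.even_or_odd' ⌊y⌋ with ⟨m, hm | hm⟩
  · refine ⟨-m, Or.inl ?_⟩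
    rw [(show Even ⌊y⌋ from ⟨m, by omega⟩).neg_one_zpow, hm]
    push_cast; ring
  · refine ⟨m + 1, Or.inr ?_⟩
    rw [(show Odd ⌊y⌋ from ⟨m, hm⟩).neg_one_zpow, hm]
    push_cast; ring

lemma intCast_mul_triangleWave (m : ℤ) (y : ℝ) :
    triangleWave (m * triangleWave y) = triangleWave (m * y) := by
  obtain ⟨j, h | h⟩ := exists_eq_add_or_eq_neg_add y
  · rw [h, show (m : ℝ) * (y + 2 * j) = m * y + 2 * ↑(m * j) by push_cast; ring,
      add_two_mul_intCast]
  · rw [h, show (m : ℝ) * (-y + 2 * j) = -(m * y) + 2 * ↑(m * j) by push_cast; ring,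
      add_two_mul_intCast, neg]

lemma mem_Icc (y : ℝ) : triangleWave y ∈ Set.Icc 0 1 := by
  have hf0 := Int.fract_nonneg y
  have hf1 := Int.fract_lt_one y
  rw [triangleWave]
  rcases Int.even_or_odd ⌊y⌋ with he | ho
  · rw [he.neg_one_zpow]; constructor <;> linarith
  · rw [ho.neg_one_zpow]; constructor <;> linarith

end triangleWave

lemma tent_eq_triangleWave {a : ℝ} (h0 : 0 ≤ a) (h1 : a ≤ 1) : tent a = triangleWave (2 * a) := by
  rw [tent]
  split_ifs with h
  · rcases (show 2 * a ≤ 1 by linarith).lt_or_eq with hlt | heq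
    · simpa using (triangleWave.intCast_add 0 (by linarith) hlt).symm
    · rw [heq]; simpa using (triangleWave.intCast 1).symm
  · rcases h1.lt_or_eq with hlt | rfl
    · rw [show 2 * a = ((1 : ℤ) : ℝ) + (2 * a - 1) by push_cast; ring,
        triangleWave.intCast_add 1 (by linarith) (by linarith)]
      norm_num; ring
    · rw [show (2 * 1 : ℝ) = ((2 : ℤ) : ℝ) by norm_num, triangleWave.intCast]
      norm_num

theorem stmt_16_general (k : ℕ) :
    ∀ x ∈ Set.Icc (0:ℝ) 1, zigzag k (tent x) = tent (zigzag k x) := by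
  intro x ⟨hx0, hx1⟩
  obtain ⟨hw0, hw1⟩ := triangleWave.mem_Icc (k * x)
  rw [zigzag_eq_triangleWave, zigzag_eq_triangleWave, tent_eq_triangleWave hx0 hx1,
    tent_eq_triangleWave hw0 hw1]
  calc triangleWave (k * triangleWave (2 * x))
      = triangleWave (k * (2 * x)) := by
        exact_mod_cast triangleWave.intCast_mul_triangleWave k (2 * x)
    _ = triangleWave (2 * (k * x)) := by ring_nf
    _ = triangleWave (2 * triangleWave (k * x)) := by
        exact_mod_cast (triangleWave.intCast_mul_triangleWave 2 (k * x)).symm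

theorem stmt_16 (k : ℕ) (hk : 1 ≤ k) :
    ∀ x ∈ Set.Icc (0:ℝ) 1, zigzag k (tent x) = tent (zigzag k x) :=
  stmt_16_general k
end

section
/- Let l_{n+1}(v) = (1/2^n) · Σ_{k=0}^{n} C(n,k) · √(1 + 4^n · v^{2k} · (1-v)^{2(n-k)}) for v ∈ (0,1). Then for every v ≠ 1/2, lim_{n→∞} l_n(v) = 2. -/
/-!
With `x_k = (2v)^k (2(1-v))^(n-k)` the summands are `C(n,k) √(1 + x_k²)`, and
`1 + x - √x ≤ √(1 + x²) ≤ 1 + x` for `x ≥ 0`. By the binomial theorem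
`∑ C(n,k) (1 + x_k) = 2^n + 2^n` and `∑ C(n,k) √x_k = (√(2v) + √(2(1-v)))^n`, so
`2 - q^n ≤ l_n(v) ≤ 2` with `q = (√(2v) + √(2(1-v)))/2`, and `q < 1` for `v ≠ 1/2`
by the strict AM–QM inequality.
-/

open Finset Filter Topology

namespace Real

lemma sqrt_pow_eq {x : ℝ} (hx : 0 ≤ x) (n : ℕ) : √(x ^ n) = √x ^ n := by
  rw [← sqrt_sq (pow_nonneg (sqrt_nonneg x) n), ← pow_mul, mul_comm, pow_mul, sq_sqrt hx]

lemma sqrt_one_add_sq_le_one_add {x : ℝ} (hx : 0 ≤ x) : √(1 + x ^ 2) ≤ 1 + x := by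
  rw [sqrt_le_left (by linarith)]
  nlinarith

lemma one_add_sub_sqrt_le_sqrt_one_add_sq {x : ℝ} (hx : 0 ≤ x) :
    1 + x - √x ≤ √(1 + x ^ 2) := by
  rcases le_total x 1 with h | h
  · have : x ≤ √x := le_sqrt_of_sq_le (by nlinarith)
    have : 1 ≤ √(1 + x ^ 2) := one_le_sqrt.mpr (by nlinarith)
    linarith
  · have : 1 ≤ √x := one_le_sqrt.mpr h
    have : x ≤ √(1 + x ^ 2) := le_sqrt_of_sq_le (by linarith)
    linarith

lemma sqrt_add_sqrt_sq_lt {a b : ℝ} (ha : 0 ≤ a) (hb : 0 ≤ b) (hab : a ≠ b) :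
    (√a + √b) ^ 2 < 2 * (a + b) := by
  have hne : √a - √b ≠ 0 := sub_ne_zero.mpr fun h => hab ((sqrt_inj ha hb).mp h)
  nlinarith [sq_sqrt ha, sq_sqrt hb, sq_pos_of_ne_zero hne]

end Real

open Real

lemma sum_choose_mul_sqrt_pow_mul_pow {a b : ℝ} (ha : 0 ≤ a) (hb : 0 ≤ b) (n : ℕ) :
    ∑ k ∈ range (n + 1), (n.choose k : ℝ) * √(a ^ k * b ^ (n - k)) = (√a + √b) ^ n := by
  rw [add_pow]
  refine sum_congr rfl fun k _ => ?_
  rw [sqrt_mul (pow_nonneg ha k), sqrt_pow_eq ha, sqrt_pow_eq hb]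
  ring

lemma sum_choose_mul_sqrt_one_add_sq_mem_Icc {a b : ℝ} (ha : 0 ≤ a) (hb : 0 ≤ b) (n : ℕ) :
    ∑ k ∈ range (n + 1), (n.choose k : ℝ) * √(1 + (a ^ k * b ^ (n - k)) ^ 2) ∈
      Set.Icc (2 ^ n + (a + b) ^ n - (√a + √b) ^ n) (2 ^ n + (a + b) ^ n) := by
  have hchoose : ∑ k ∈ range (n + 1), (n.choose k : ℝ) = 2 ^ n := by
    exact_mod_cast Nat.sum_range_choose n
  have hlin : ∑ k ∈ range (n + 1), (n.choose k : ℝ) * (1 + a ^ k * b ^ (n - k)) =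
      2 ^ n + (a + b) ^ n := by
    rw [add_pow, ← hchoose, ← sum_add_distrib]
    exact sum_congr rfl fun k _ => by ring
  constructor
  · rw [← hlin, ← sum_choose_mul_sqrt_pow_mul_pow ha hb, ← sum_sub_distrib]
    gcongr with k
    rw [← mul_sub]
    gcongr
    exact one_add_sub_sqrt_le_sqrt_one_add_sq (by positivity)
  · rw [← hlin]
    gcongr with k
    exact sqrt_one_add_sq_le_one_add (by positivity)

lemma tendsto_inv_two_pow_mul_sum_choose_mul_sqrt_one_add_sq {a b : ℝ} (ha : 0 ≤ a)
    (hb : 0 ≤ b) (hab : a + b = 2) (hne : a ≠ b) :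
    Tendsto (fun n : ℕ => (1 / 2 ^ n : ℝ) *
      ∑ k ∈ range (n + 1), (n.choose k : ℝ) * √(1 + (a ^ k * b ^ (n - k)) ^ 2)) atTop (𝓝 2) := by
  set q := (√a + √b) / 2
  have hq : q < 1 := by
    have hsq := sqrt_add_sqrt_sq_lt ha hb hne
    rw [div_lt_one zero_lt_two]
    exact lt_of_pow_lt_pow_left₀ 2 zero_le_two (by linarith)
  have hbounds (n : ℕ) : (1 / 2 ^ n : ℝ) *
      ∑ k ∈ range (n + 1), (n.choose k : ℝ) * √(1 + (a ^ k * b ^ (n - k)) ^ 2) ∈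
      Set.Icc (2 - q ^ n) 2 := by
    obtain ⟨hlo, hhi⟩ := sum_choose_mul_sqrt_one_add_sq_mem_Icc ha hb n
    rw [hab] at hlo hhi
    have h2n : (0 : ℝ) < 2 ^ n := by positivity
    constructor
    · rw [div_pow, one_div_mul_eq_div, le_div_iff₀ h2n, sub_mul, div_mul_cancel₀ _ h2n.ne']
      linarith
    · rw [one_div_mul_eq_div, div_le_iff₀ h2n]
      linarith
  refine tendsto_of_tendsto_of_tendsto_of_le_of_le ?_ tendsto_const_nhds
    (fun n => (hbounds n).1) (fun n => (hbounds n).2)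
  simpa using (tendsto_pow_atTop_nhds_zero_of_lt_one (by positivity) hq).const_sub 2

lemma two_pow_mul_pow_mul_pow_eq_sq {k n : ℕ} (hk : k ≤ n) (x y : ℝ) :
    2 ^ (2 * n) * x ^ (2 * k) * y ^ (2 * (n - k)) = ((2 * x) ^ k * (2 * y) ^ (n - k)) ^ 2 := by
  rw [show 2 * n = 2 * k + 2 * (n - k) by omega, mul_pow, mul_pow]
  ring

theorem stmt_18 (v : ℝ) (hv : v ∈ Set.Ioo (0:ℝ) 1) (hv2 : v ≠ 1/2) :
    Filter.Tendsto (fun n : ℕ =>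
      (1 / 2^n : ℝ) * ∑ k ∈ Finset.range (n+1),
        (n.choose k : ℝ) * Real.sqrt (1 + 2^(2*n) * v^(2*k) * (1-v)^(2*(n-k))))
      Filter.atTop (nhds 2) := by
  obtain ⟨hv0, hv1⟩ := hv
  have hlim := tendsto_inv_two_pow_mul_sum_choose_mul_sqrt_one_add_sq (a := 2 * v)
    (b := 2 * (1 - v)) (by positivity) (by linarith) (by ring) (by contrapose! hv2; linarith)
  refine hlim.congr fun n => ?_
  congr 1
  refine sum_congr rfl fun k hk => ?_
  rw [two_pow_mul_pow_mul_pow_eq_sq (Nat.lt_succ_iff.mp (mem_range.mp hk))]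
end
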